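/- Define the product of partitioned permutations (𝒱,π)·(𝒲,σ) := (𝒱 ∨ 𝒲, πσ) if |(𝒱,π)| + |(𝒲,σ)| = |(𝒱 ∨ 𝒲, πσ)| and 0 otherwise (in the formal linear span). This multiplication is associative: ((𝒱,π)·(𝒲,σ))·(𝒰,τ) = (𝒱,π)·((𝒲,σ)·(𝒰,τ)). -/

import Mathlib

/-!
Lengths of partitioned permutations are subadditive: `|(𝒱 ∨ 𝒲, πσ)| ≤ |(𝒱, π)| + |(𝒲, σ)|`.
This combines the genus inequality `#π + #σ + #(πσ) ≤ n + 2 #(π ∨ σ)` (proved by splitting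
transpositions off `σ`, each of which changes the number of cycles by one) with the
semimodularity of the number of blocks in the partition lattice. Given subadditivity, each
bracketing of `a · b · c` is nonzero exactly when `|a| + |b| + |c| = |abc|`, and then both
equal `(𝒱 ∨ 𝒲 ∨ 𝒰, πστ)`.
-/

open Equiv

def orbitSetoid {α : Type*} (π : Equiv.Perm α) : Setoid α where
  r := π.SameCycle
  iseqv := ⟨fun x => Equiv.Perm.SameCycle.refl π x, fun h => h.symm, fun h h' => h.trans h'⟩

noncomputable def cycleCount {n : ℕ} (π : Equiv.Perm (Fin n)) : ℕ :=
  Nat.card (Quotient (orbitSetoid π))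

noncomputable def pLen {n : ℕ} (V : Setoid (Fin n)) : ℤ :=
  (n : ℤ) - Nat.card (Quotient V)

noncomputable def permLen {n : ℕ} (π : Equiv.Perm (Fin n)) : ℤ :=
  (n : ℤ) - cycleCount π

theorem orbitSetoid_mul_le {α : Type*} (π σ : Equiv.Perm α) :
    orbitSetoid (π * σ) ≤ orbitSetoid π ⊔ orbitSetoid σ := by
  set S := orbitSetoid π ⊔ orbitSetoid σ with hS
  have hstep : ∀ x, S x ((π * σ) x) := by
    intro x
    have h1 : S x (σ x) := Setoid.le_def.mp le_sup_right ⟨1, by simp⟩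
    have h2 : S (σ x) (π (σ x)) := Setoid.le_def.mp le_sup_left ⟨1, by simp⟩
    exact S.iseqv.trans h1 h2
  have hpow : ∀ (k : ℤ) (x : α), S x (((π * σ) ^ k) x) := by
    intro k
    induction k using Int.induction_on with
    | zero => intro x; simpa using S.iseqv.refl x
    | succ k ih =>
        intro x
        have h : ((π * σ) ^ ((k : ℤ) + 1)) x = ((π * σ) ^ (k : ℤ)) ((π * σ) x) := by
          rw [zpow_add_one]
          simp [Equiv.Perm.mul_apply]
        rw [h]
        exact S.iseqv.trans (hstep x) (ih ((π * σ) x))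
    | pred k ih =>
        intro x
        have h : ((π * σ) ^ (-(k : ℤ) - 1)) x = ((π * σ) ^ (-(k : ℤ))) ((π * σ)⁻¹ x) := by
          rw [zpow_sub_one]
          simp [Equiv.Perm.mul_apply]
        rw [h]
        have hinv : S x ((π * σ)⁻¹ x) := by
          have h2 := hstep ((π * σ)⁻¹ x)
          simp only [Equiv.Perm.coe_inv, Equiv.apply_symm_apply] at h2
          exact S.iseqv.symm h2
        exact S.iseqv.trans hinv (ih ((π * σ)⁻¹ x))
  rw [Setoid.le_def]
  rintro x y ⟨k, hk⟩
  exact hk ▸ hpow k x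

/-- A partitioned permutation: a pair `(𝒱, π)` with `𝒱` a partition of `{1,…,n}`
(encoded as a setoid on `Fin n`) coarser than the orbit partition of `π`. -/
structure PartitionedPerm (n : ℕ) where
  part : Setoid (Fin n)
  perm : Equiv.Perm (Fin n)
  hle : orbitSetoid perm ≤ part

/-- The length `|(𝒱,π)| := 2|𝒱| − |π|` of a partitioned permutation. -/
noncomputable def ppLen {n : ℕ} (a : PartitionedPerm n) : ℤ :=
  2 * pLen a.part - permLen a.perm

/-- The product of partitioned permutations: `(𝒱,π)·(𝒲,σ) = (𝒱∨𝒲, πσ)` if the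
lengths add up, and `0` (here: `none`) otherwise. -/
noncomputable def ppMul {n : ℕ} (a b : PartitionedPerm n) : Option (PartitionedPerm n) :=
  if ppLen a + ppLen b = 2 * pLen (a.part ⊔ b.part) - permLen (a.perm * b.perm)
  then some ⟨a.part ⊔ b.part, a.perm * b.perm,
        le_trans (orbitSetoid_mul_le a.perm b.perm) (sup_le_sup a.hle b.hle)⟩
  else none

namespace Setoid

variable {α : Type*}

-- `S ⊔` (the relation identifying `a` and `b`), described explicitly
def merge (S : Setoid α) (a b : α) : Setoid α where
  r u v := S u v ∨ S u a ∧ S b v ∨ S u b ∧ S a v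
  iseqv := by
    refine ⟨fun u => Or.inl (S.refl u), ?_, ?_⟩
    · rintro u v (h | ⟨h₁, h₂⟩ | ⟨h₁, h₂⟩)
      · exact Or.inl (S.symm h)
      · exact Or.inr (Or.inr ⟨S.symm h₂, S.symm h₁⟩)
      · exact Or.inr (Or.inl ⟨S.symm h₂, S.symm h₁⟩)
    · rintro u v w (h | ⟨h₁, h₂⟩ | ⟨h₁, h₂⟩) (h' | ⟨h₁', h₂'⟩ | ⟨h₁', h₂'⟩)
      · exact Or.inl (S.trans h h')
      · exact Or.inr (Or.inl ⟨S.trans h h₁', h₂'⟩)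
      · exact Or.inr (Or.inr ⟨S.trans h h₁', h₂'⟩)
      · exact Or.inr (Or.inl ⟨h₁, S.trans h₂ h'⟩)
      · exact Or.inl (S.trans h₁ (S.trans (S.symm (S.trans h₂ h₁')) h₂'))
      · exact Or.inl (S.trans h₁ h₂')
      · exact Or.inr (Or.inr ⟨h₁, S.trans h₂ h'⟩)
      · exact Or.inl (S.trans h₁ h₂')
      · exact Or.inr (Or.inr ⟨h₁, h₂'⟩)

variable {S T : Setoid α} {a b : α}

theorem le_merge : S ≤ S.merge a b := fun _ _ => Or.inl

theorem merge_rel : S.merge a b a b := Or.inr (Or.inl ⟨S.refl a, S.refl b⟩)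

theorem merge_le_iff : S.merge a b ≤ T ↔ S ≤ T ∧ T a b := by
  refine ⟨fun h => ⟨le_merge.trans h, h merge_rel⟩, fun ⟨hST, hab⟩ => ?_⟩
  rintro u v (h | ⟨h₁, h₂⟩ | ⟨h₁, h₂⟩)
  · exact hST h
  · exact T.trans (hST h₁) (T.trans hab (hST h₂))
  · exact T.trans (hST h₁) (T.trans (T.symm hab) (hST h₂))

theorem merge_eq_self (h : S a b) : S.merge a b = S :=
  le_antisymm (merge_le_iff.2 ⟨le_rfl, h⟩) le_merge

theorem merge_sup (S T : Setoid α) (a b : α) : S.merge a b ⊔ T = (S ⊔ T).merge a b :=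
  le_antisymm
    (sup_le (merge_le_iff.2 ⟨le_sup_left.trans le_merge, merge_rel⟩) (le_sup_right.trans le_merge))
    (merge_le_iff.2 ⟨sup_le_sup_right le_merge T, le_sup_left (a := S.merge a b) merge_rel⟩)

noncomputable def numClasses (S : Setoid α) : ℕ := Nat.card (Quotient S)

theorem numClasses_bot : (⊥ : Setoid α).numClasses = Nat.card α :=
  Nat.card_congr quotientBotEquiv

variable [Finite α]

theorem numClasses_le_card (S : Setoid α) : S.numClasses ≤ Nat.card α :=
  Nat.card_le_card_of_surjective _ Quotient.mk_surjective

theorem numClasses_anti (h : S ≤ T) : T.numClasses ≤ S.numClasses :=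
  Nat.card_le_card_of_surjective (map_of_le h) (Quotient.ind fun u => ⟨⟦u⟧, rfl⟩)

theorem numClasses_merge_add_one (h : ¬ S a b) : (S.merge a b).numClasses + 1 = S.numClasses := by
  classical
  have hb : ∀ u, ⟦u⟧ ≠ (⟦b⟧ : Quotient S) → ¬ S u b := fun u hu h => hu (Quotient.sound h)
  -- every class other than that of `b` survives, and the class of `b` joins that of `a`
  let q : {c : Quotient S // c ≠ ⟦b⟧} → Quotient (S.merge a b) := fun c => map_of_le le_merge c
  have hq : Function.Bijective q := by
    refine ⟨?_, Quotient.ind fun u => ?_⟩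
    · rintro ⟨⟨u⟩, hu⟩ ⟨⟨v⟩, hv⟩ huv
      rcases Quotient.exact huv with huv | ⟨-, hbv⟩ | ⟨hub, -⟩
      · exact Subtype.ext (Quotient.sound huv)
      · exact absurd (S.symm hbv) (hb v hv)
      · exact absurd hub (hb u hu)
    · by_cases hu : S u b
      · exact ⟨⟨⟦a⟧, fun h' => h (Quotient.exact h')⟩,
          Quotient.sound (Or.inr (Or.inl ⟨S.refl a, S.symm hu⟩))⟩
      · exact ⟨⟨⟦u⟧, fun h' => hu (Quotient.exact h')⟩, rfl⟩
  rw [numClasses, numClasses, ← Nat.card_eq_of_bijective q hq, ← Finite.card_option,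
    Nat.card_congr (Equiv.optionSubtypeNe _)]

theorem numClasses_le_merge_add_one (S : Setoid α) (a b : α) :
    S.numClasses ≤ (S.merge a b).numClasses + 1 := by
  by_cases h : S a b
  · rw [merge_eq_self h]; omega
  · exact (numClasses_merge_add_one h).ge

theorem numClasses_add_numClasses_sup_le {A A' : Setoid α} (hA : A ≤ A') (B : Setoid α) :
    A'.numClasses + (A ⊔ B).numClasses ≤ A.numClasses + (A' ⊔ B).numClasses := by
  induction hk : A.numClasses using Nat.strong_induction_on generalizing A with
  | _ k ih =>
  by_cases hA' : A' ≤ A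
  · obtain rfl := le_antisymm hA hA'; omega
  obtain ⟨x, y, hxy', hxy⟩ : ∃ x y, A' x y ∧ ¬ A x y := by
    simpa [le_def] using hA'
  have hmerge := numClasses_merge_add_one hxy
  have hsup := numClasses_le_merge_add_one (A ⊔ B) x y
  rw [← merge_sup] at hsup
  have := ih _ (by omega) (merge_le_iff.2 ⟨hA, hxy'⟩) rfl
  omega

end Setoid

section Orbits

variable {α : Type*}

theorem orbitSetoid_le_iff {π : Perm α} {T : Setoid α} :
    orbitSetoid π ≤ T ↔ ∀ x, T x (π x) := by
  refine ⟨fun h x => h ⟨1, by simp⟩, fun h => ?_⟩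
  have hpow : ∀ (k : ℤ) x, T x ((π ^ k) x) := by
    intro k
    induction k using Int.induction_on with
    | zero => exact T.refl
    | succ k ih =>
      intro x
      rw [zpow_add_one, Perm.mul_apply]
      exact T.trans (h x) (ih (π x))
    | pred k ih =>
      intro x
      rw [sub_eq_add_neg, zpow_add, zpow_neg_one, Perm.mul_apply]
      exact T.trans (T.symm (by simpa using h (π⁻¹ x))) (ih (π⁻¹ x))
  rintro x _ ⟨k, rfl⟩
  exact hpow k x

theorem orbitSetoid_one : orbitSetoid (1 : Perm α) = ⊥ :=
  le_bot_iff.1 (orbitSetoid_le_iff.2 fun _ => rfl)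

variable [DecidableEq α]

theorem orbitSetoid_swap_le {T : Setoid α} {a b : α} (h : T a b) : orbitSetoid (swap a b) ≤ T := by
  refine orbitSetoid_le_iff.2 fun x => ?_
  rw [swap_apply_def]
  split_ifs with hxa hxb
  · exact hxa ▸ h
  · exact hxb ▸ T.symm h
  · exact T.refl x

theorem orbitSetoid_mul_swap_merge (ρ : Perm α) (a b : α) :
    (orbitSetoid (ρ * swap a b)).merge a b = (orbitSetoid ρ).merge a b := by
  have key : ∀ τ : Perm α, (orbitSetoid (τ * swap a b)).merge a b ≤ (orbitSetoid τ).merge a b :=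
    fun τ => Setoid.merge_le_iff.2
      ⟨(orbitSetoid_mul_le τ _).trans (sup_le Setoid.le_merge (orbitSetoid_swap_le Setoid.merge_rel)),
        Setoid.merge_rel⟩
  refine le_antisymm (key ρ) ?_
  simpa [mul_assoc] using key (ρ * swap a b)

variable [Finite α]

theorem sameCycle_mul_swap_of_not_sameCycle {ρ : Perm α} {a b : α} (h : ¬ ρ.SameCycle a b) :
    (ρ * swap a b).SameCycle a b := by
  have hper : ∃ m, 0 < m ∧ (ρ ^ m) b = b :=
    ⟨orderOf ρ, orderOf_pos ρ, by rw [pow_orderOf_eq_one]; rfl⟩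
  obtain ⟨hm, hmb⟩ := Nat.find_spec hper
  -- `ρ * swap a b` sends `a` to `ρ b` and then follows the `ρ`-orbit of `b`, which avoids `a`
  -- and `b` until it returns to `b`
  have key : ∀ j, 0 < j → j ≤ Nat.find hper → ((ρ * swap a b) ^ j) a = (ρ ^ j) b := by
    intro j hj hjm
    induction j with
    | zero => omega
    | succ j ih =>
      rcases Nat.eq_zero_or_pos j with rfl | hj
      · simp
      have hjb : (ρ ^ j) b ≠ b := fun hjb => Nat.find_min hper (by omega) ⟨hj, hjb⟩
      have hja : (ρ ^ j) b ≠ a := fun hja => h ⟨-j, by simp [← hja]⟩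
      rw [pow_succ', Perm.mul_apply, ih hj (by omega), Perm.mul_apply,
        swap_apply_of_ne_of_ne hja hjb, pow_succ', Perm.mul_apply]
  exact ⟨Nat.find hper, by rw [zpow_natCast, key _ hm le_rfl, hmb]⟩

theorem numClasses_orbitSetoid_mul_swap_add_one {ρ : Perm α} {a b : α}
    (h : ¬ ρ.SameCycle a b) :
    (orbitSetoid (ρ * swap a b)).numClasses + 1 = (orbitSetoid ρ).numClasses := by
  have hjoin := Setoid.merge_eq_self (S := orbitSetoid _) (sameCycle_mul_swap_of_not_sameCycle h)
  rw [← hjoin, orbitSetoid_mul_swap_merge]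
  exact Setoid.numClasses_merge_add_one h

theorem numClasses_orbitSetoid_mul_swap_le (ρ : Perm α) (a b : α) :
    (orbitSetoid (ρ * swap a b)).numClasses ≤ (orbitSetoid ρ).numClasses + 1 :=
  calc (orbitSetoid (ρ * swap a b)).numClasses
      ≤ ((orbitSetoid (ρ * swap a b)).merge a b).numClasses + 1 :=
        Setoid.numClasses_le_merge_add_one _ a b
    _ = ((orbitSetoid ρ).merge a b).numClasses + 1 := by rw [orbitSetoid_mul_swap_merge]
    _ ≤ (orbitSetoid ρ).numClasses + 1 := by
        gcongr; exact Setoid.numClasses_anti Setoid.le_merge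

theorem numClasses_orbitSetoid_mul_swap_apply {σ : Perm α} {a : α} (ha : σ a ≠ a) :
    (orbitSetoid (σ * swap a (σ a))).numClasses = (orbitSetoid σ).numClasses + 1 := by
  have hfix : (σ * swap a (σ a)) (σ a) = σ a := by simp
  have hcut : ¬ (σ * swap a (σ a)).SameCycle a (σ a) := fun h => ha (h.eq_of_right hfix).symm
  have := numClasses_orbitSetoid_mul_swap_add_one hcut
  rw [mul_assoc, swap_mul_self, mul_one] at this
  omega

end Orbits

-- The defect `card α + 2 * #(π ∨ σ) - #π - #σ - #(πσ)` is twice the genus of the hypermap `(π, σ)`.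
theorem numClasses_orbitSetoid_add_le {α : Type*} [Finite α] (π σ : Perm α) :
    (orbitSetoid π).numClasses + (orbitSetoid σ).numClasses + (orbitSetoid (π * σ)).numClasses ≤
      Nat.card α + 2 * (orbitSetoid π ⊔ orbitSetoid σ).numClasses := by
  classical
  induction hk : Nat.card α - (orbitSetoid σ).numClasses using Nat.strong_induction_on
    generalizing σ with
  | _ k ih =>
  rcases eq_or_ne σ 1 with rfl | hσ
  · simp only [orbitSetoid_one, Setoid.numClasses_bot, mul_one, bot_le, sup_of_le_left]
    omega
  -- split `σ` at a non-fixed point `a` into `σ' = σ * swap a (σ a)`, which has one more cycle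
  obtain ⟨a, ha⟩ : ∃ a, σ a ≠ a := not_forall.1 fun h => hσ (Equiv.ext h)
  set b := σ a
  set σ' := σ * swap a b
  have hsplit : (orbitSetoid σ').numClasses = (orbitSetoid σ).numClasses + 1 :=
    numClasses_orbitSetoid_mul_swap_apply ha
  have hσ' : (orbitSetoid σ').merge a b = orbitSetoid σ := by
    rw [orbitSetoid_mul_swap_merge]
    exact Setoid.merge_eq_self (S := orbitSetoid σ) ⟨1, rfl⟩
  have hsup : orbitSetoid π ⊔ orbitSetoid σ = (orbitSetoid π ⊔ orbitSetoid σ').merge a b := by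
    rw [sup_comm (orbitSetoid π) (orbitSetoid σ'), ← Setoid.merge_sup, hσ', sup_comm]
  have hπσ : π * σ = π * σ' * swap a b := by simp [σ', mul_assoc]
  have IH := ih _ (by have := (orbitSetoid σ').numClasses_le_card; omega) σ' rfl
  by_cases hab : (orbitSetoid π ⊔ orbitSetoid σ') a b
  · have := numClasses_orbitSetoid_mul_swap_le (π * σ') a b
    rw [hsup, Setoid.merge_eq_self hab, hπσ]
    omega
  · have hjoin : ¬ (π * σ').SameCycle a b := fun h => hab (orbitSetoid_mul_le π σ' h)
    have := numClasses_orbitSetoid_mul_swap_add_one hjoin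
    have := Setoid.numClasses_merge_add_one hab
    rw [hsup, hπσ]
    omega

section GeodesicProduct

variable {M : Type*} [Semigroup M] (L : M → ℤ)

def geodesicMul (a b : M) : Option M :=
  if L a + L b = L (a * b) then some (a * b) else none

variable {L} (hL : ∀ a b, L (a * b) ≤ L a + L b)
include hL

theorem geodesicMul_bind_right (a b c : M) :
    (geodesicMul L a b).bind (geodesicMul L · c) =
      if L a + L b + L c = L (a * b * c) then some (a * b * c) else none := by
  have habc := hL (a * b) c
  unfold geodesicMul
  by_cases hab : L a + L b = L (a * b)
  · rw [if_pos hab, Option.bind_some, hab]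
  · rw [if_neg hab, Option.bind_none, if_neg (by have := hL a b; omega)]

theorem geodesicMul_bind_left (a b c : M) :
    (geodesicMul L b c).bind (geodesicMul L a ·) =
      if L a + L b + L c = L (a * b * c) then some (a * b * c) else none := by
  have habc := hL a (b * c)
  rw [← mul_assoc] at habc
  unfold geodesicMul
  by_cases hbc : L b + L c = L (b * c)
  · rw [if_pos hbc, Option.bind_some, ← hbc, add_assoc, mul_assoc]
  · rw [if_neg hbc, Option.bind_none, if_neg (by have := hL b c; omega)]

theorem geodesicMul_assoc (a b c : M) :
    (geodesicMul L a b).bind (geodesicMul L · c) = (geodesicMul L b c).bind (geodesicMul L a ·) := by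
  rw [geodesicMul_bind_right hL, geodesicMul_bind_left hL]

end GeodesicProduct

namespace PartitionedPerm

variable {n : ℕ}

attribute [ext] PartitionedPerm

noncomputable instance : Semigroup (PartitionedPerm n) where
  mul a b := ⟨a.part ⊔ b.part, a.perm * b.perm,
    le_trans (orbitSetoid_mul_le a.perm b.perm) (sup_le_sup a.hle b.hle)⟩
  mul_assoc _ _ _ := PartitionedPerm.ext (sup_assoc _ _ _) (mul_assoc _ _ _)

theorem ppMul_eq_geodesicMul (a b : PartitionedPerm n) : ppMul a b = geodesicMul ppLen a b := rfl

theorem ppLen_mul_le (a b : PartitionedPerm n) : ppLen (a * b) ≤ ppLen a + ppLen b := by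
  have genus := numClasses_orbitSetoid_add_le a.perm b.perm
  have exchange_a := Setoid.numClasses_add_numClasses_sup_le a.hle (orbitSetoid b.perm)
  have exchange_b := Setoid.numClasses_add_numClasses_sup_le b.hle a.part
  rw [sup_comm (orbitSetoid b.perm), sup_comm b.part] at exchange_b
  simp only [Setoid.numClasses, Nat.card_fin] at genus exchange_a exchange_b
  change 2 * pLen (a.part ⊔ b.part) - permLen (a.perm * b.perm) ≤ _
  simp only [ppLen, pLen, permLen, cycleCount]
  omega

end PartitionedPerm

/-- The multiplication of partitioned permutations (with value `0`, i.e. `none`, when the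
lengths do not add) is associative:
`((𝒱,π)·(𝒲,σ))·(𝒰,τ) = (𝒱,π)·((𝒲,σ)·(𝒰,τ))`. -/
theorem ppMul_assoc {n : ℕ} (a b c : PartitionedPerm n) :
    (ppMul a b).bind (fun x => ppMul x c) = (ppMul b c).bind (fun x => ppMul a x) := by
  simp only [PartitionedPerm.ppMul_eq_geodesicMul]
  exact geodesicMul_assoc PartitionedPerm.ppLen_mul_le a b c
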